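/- arXiv:1904.07684 — 2 statements merged into one kernel-verified Lean document; each statement's English description precedes it below -/
import Mathlib

section
/- Monotone extension comparison of integrals: let f be an increasing continuous function on a closed bounded interval [a,b] of a time scale 𝕋 ⊆ ℝ (a nonempty closed subset of ℝ), and let F : [a,b] → ℝ be the extension of f defined by F(s) = f(s) if s ∈ 𝕋, and F(s) = f(t) if s ∈ (t, σ(t)) for some t ∈ 𝕋 (where σ(t) = inf{u ∈ 𝕋 : u > t} is the forward jump operator). Then the time-scale delta integral of f over [a,b] satisfies ∫_a^b f(t) Δt ≤ ∫_a^b F(t) dt, where the right-hand side is the ordinary Lebesgue integral over the real interval [a,b]. -/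
open MeasureTheory intervalIntegral

/-- Forward jump operator of a time scale `T ⊆ ℝ`. -/
noncomputable def tsSigma (T : Set ℝ) (t : ℝ) : ℝ :=
  sInf {s | s ∈ T ∧ t < s}

/-- Hilger (delta) derivative of `g` at a point `t` of the time scale `T`,
with value `L`. -/
def HasDeltaDerivAt (T : Set ℝ) (g : ℝ → ℝ) (L t : ℝ) : Prop :=
  ∀ ε > 0, ∃ δ > 0, ∀ s ∈ T, |s - t| < δ →
    |g (tsSigma T t) - g s - L * (tsSigma T t - s)| ≤ ε * |tsSigma T t - s|

theorem delta_integral_le_integral_of_extension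
    (T : Set ℝ) (hT : IsClosed T) (hTne : T.Nonempty)
    (a b : ℝ) (ha : a ∈ T) (hb : b ∈ T) (hab : a ≤ b)
    (f F G : ℝ → ℝ)
    (hmono : MonotoneOn f (T ∩ Set.Icc a b))
    (hcont : ContinuousOn f (T ∩ Set.Icc a b))
    -- `F` is the extension of `f` to the real interval `[a,b]`:
    -- `F s = f s` for `s ∈ T`, and `F s = f t` for `s ∈ (t, σ(t))`.
    (hF : ∀ s ∈ Set.Icc a b, F s = f (sSup (T ∩ Set.Iic s)))
    -- `G` is a delta antiderivative of `f` on `[a,b] ∩ T`,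
    -- so that `∫_a^b f(t) Δt = G b - G a`.
    (hG : ContinuousOn G (T ∩ Set.Icc a b))
    (hG' : ∀ t ∈ T ∩ Set.Ico a b, HasDeltaDerivAt T G (f t) t) :
    G b - G a ≤ ∫ s in a..b, F s := by
  rcases eq_or_lt_of_le hab with rfl | hab'
  · simp
  -- basic facts about τ s = sSup (T ∩ Iic s)
  have hτmem : ∀ s ∈ Set.Icc a b, sSup (T ∩ Set.Iic s) ∈ T ∩ Set.Icc a b := by
    intro s hs
    have hbdd : BddAbove (T ∩ Set.Iic s) := ⟨s, fun x hx => hx.2⟩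
    have hne : (T ∩ Set.Iic s).Nonempty := ⟨a, ha, hs.1⟩
    have hcl : IsClosed (T ∩ Set.Iic s) := hT.inter isClosed_Iic
    have hmem := hcl.csSup_mem hne hbdd
    exact ⟨hmem.1, le_csSup hbdd ⟨ha, hs.1⟩, le_trans hmem.2 hs.2⟩
  have hτ_ge : ∀ c ∈ T, ∀ s : ℝ, c ≤ s → c ≤ sSup (T ∩ Set.Iic s) := by
    intro c hc s hcs
    exact le_csSup ⟨s, fun x hx => hx.2⟩ ⟨hc, hcs⟩
  have hFmono : MonotoneOn F (Set.Icc a b) := by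
    intro s hs s' hs' hss'
    rw [hF s hs, hF s' hs']
    refine hmono (hτmem s hs) (hτmem s' hs')
      (csSup_le_csSup ⟨s', fun x hx => hx.2⟩ ⟨a, ha, hs.1⟩
        (Set.inter_subset_inter_right _ (Set.Iic_subset_Iic.2 hss')))
  have hFint : IntervalIntegrable F volume a b := by
    apply MonotoneOn.intervalIntegrable
    rwa [Set.uIcc_of_le hab]
  have hFintsub : ∀ c ∈ Set.Icc a b, ∀ d ∈ Set.Icc a b, IntervalIntegrable F volume c d := by
    intro c hc d hd
    apply MonotoneOn.intervalIntegrable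
    exact hFmono.mono (Set.uIcc_subset_Icc hc hd)
  have hFlow : ∀ c ∈ T ∩ Set.Icc a b, ∀ u ∈ Set.Icc a b, c ≤ u → f c ≤ F u := by
    intro c hc u hu hcu
    rw [hF u hu]
    exact hmono hc (hτmem u hu) (hτ_ge c hc.1 u hcu)
  -- main estimate with an ε of room
  have key : ∀ ε > (0:ℝ), G b - G a ≤ (∫ s in a..b, F s) + ε * (b - a) := by
    intro ε hε
    set S : Set ℝ := {x | x ∈ T ∩ Set.Icc a b ∧
      G x - G a ≤ (∫ s in a..x, F s) + ε * (x - a)} with hS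
    have haS : a ∈ S := by
      constructor
      · exact ⟨ha, le_refl a, hab⟩
      · simp
    have hSbdd : BddAbove S := ⟨b, fun x hx => hx.1.2.2⟩
    have hSne : S.Nonempty := ⟨a, haS⟩
    set c := sSup S with hc
    have hc_cl : c ∈ closure S := csSup_mem_closure hSne hSbdd
    have hScl : S ⊆ T ∩ Set.Icc a b := fun x hx => hx.1
    have hcT : c ∈ T ∩ Set.Icc a b := by
      have : closure S ⊆ T ∩ Set.Icc a b :=
        closure_minimal hScl (hT.inter isClosed_Icc)
      exact this hc_cl
    -- c belongs to S, by continuity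
    have hcS : c ∈ S := by
      refine ⟨hcT, ?_⟩
      have hne : (nhdsWithin c S).NeBot := mem_closure_iff_nhdsWithin_neBot.1 hc_cl
      have hGc : Filter.Tendsto G (nhdsWithin c S) (nhds (G c)) :=
        (hG c hcT).mono hScl
      have hIc : Filter.Tendsto (fun x => ∫ s in a..x, F s) (nhdsWithin c S)
          (nhds (∫ s in a..c, F s)) := by
        have hcont' : ContinuousOn (fun x => ∫ s in a..x, F s) (Set.uIcc a b) :=
          continuousOn_primitive_interval' hFint Set.left_mem_uIcc
        have hcu : c ∈ Set.uIcc a b := by rw [Set.uIcc_of_le hab]; exact hcT.2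
        exact ((hcont' c hcu).mono (fun x hx => by
          rw [Set.uIcc_of_le hab]; exact (hScl hx).2))
      have hlin : Filter.Tendsto (fun x : ℝ => ε * (x - a)) (nhdsWithin c S)
          (nhds (ε * (c - a))) :=
        ((continuous_const.mul (continuous_id.sub continuous_const)).tendsto c).mono_left
          nhdsWithin_le_nhds
      have htend : Filter.Tendsto
          (fun x => G x - G a - ((∫ s in a..x, F s) + ε * (x - a)))
          (nhdsWithin c S)
          (nhds (G c - G a - ((∫ s in a..c, F s) + ε * (c - a)))) :=
        (hGc.sub tendsto_const_nhds).sub (hIc.add hlin)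
      have hev : ∀ᶠ x in nhdsWithin c S,
          G x - G a - ((∫ s in a..x, F s) + ε * (x - a)) ≤ 0 := by
        filter_upwards [self_mem_nhdsWithin] with x hx
        linarith [hx.2]
      have := le_of_tendsto htend hev
      linarith
    -- show c = b
    have hcb : c = b := by
      by_contra hne
      have hclt : c < b := lt_of_le_of_ne hcT.2.2 hne
      obtain ⟨δ, hδ, Hd⟩ := hG' c ⟨hcT.1, hcT.2.1, hclt⟩ ε hε
      set A : Set ℝ := {s | s ∈ T ∧ c < s} with hA
      have hAne : A.Nonempty := ⟨b, hb, hclt⟩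
      have hAbdd : BddBelow A := ⟨c, fun x hx => hx.2.le⟩
      have hσ_ge : c ≤ tsSigma T c := le_csInf hAne (fun x hx => hx.2.le)
      have hσ_le_b : tsSigma T c ≤ b := csInf_le hAbdd ⟨hb, hclt⟩
      -- a generic step: any point s ∈ T ∩ (c, b] with the estimate lies in S
      have step : ∀ s, s ∈ T → c < s → s ≤ b →
          G s - G c ≤ f c * (s - c) + ε * (s - c) → s ∈ S := by
        intro s hsT hcs hsb hest
        have hsI : s ∈ Set.Icc a b := ⟨le_trans hcT.2.1 hcs.le, hsb⟩
        have hint1 : IntervalIntegrable F volume a c := hFintsub a ⟨le_refl a, hab⟩ c hcT.2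
        have hint2 : IntervalIntegrable F volume c s := hFintsub c hcT.2 s hsI
        have hlow : (∫ u in c..s, (f c : ℝ)) ≤ ∫ u in c..s, F u := by
          apply intervalIntegral.integral_mono_on hcs.le intervalIntegrable_const hint2
          intro u hu
          exact hFlow c hcT u ⟨le_trans hcT.2.1 hu.1, le_trans hu.2 hsb⟩ hu.1
        rw [intervalIntegral.integral_const, smul_eq_mul] at hlow
        have hadd : (∫ u in a..c, F u) + (∫ u in c..s, F u) = ∫ u in a..s, F u :=
          intervalIntegral.integral_add_adjacent_intervals hint1 hint2
        refine ⟨⟨hsT, hsI⟩, ?_⟩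
        have h1 := hcS.2
        have : G s - G a ≤ (∫ u in a..c, F u) + (∫ u in c..s, F u) + ε * (s - a) := by
          nlinarith
        rwa [hadd] at this
      rcases lt_or_ge c (tsSigma T c) with hscat | hdense
      · -- right-scattered case
        set σc := tsSigma T c with hσc
        have hσT : σc ∈ T := by
          have h1 : σc ∈ closure A := csInf_mem_closure hAne hAbdd
          have h2 : closure A ⊆ T := closure_minimal (fun x hx => hx.1) hT
          exact h2 h1
        have hest := Hd c hcT.1 (by simpa using hδ)
        rw [abs_of_nonneg (sub_nonneg.2 hσ_ge)] at hest
        have hest' : G σc - G c ≤ f c * (σc - c) + ε * (σc - c) := by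
          have := abs_le.1 hest
          linarith [this.1, this.2]
        have hmem := step σc hσT hscat hσ_le_b hest'
        have : σc ≤ c := le_csSup hSbdd hmem
        linarith
      · -- right-dense case
        have hσeq : tsSigma T c = c := le_antisymm hdense hσ_ge
        have hpos : (0:ℝ) < min δ (b - c) := lt_min hδ (by linarith)
        have : sInf A < c + min δ (b - c) := by
          rw [show sInf A = tsSigma T c from rfl, hσeq]; linarith
        obtain ⟨s, hsA, hslt⟩ := (csInf_lt_iff hAbdd hAne).1 this
        have hsδ : |s - c| < δ := by
          rw [abs_of_nonneg (by linarith [hsA.2.le] : (0:ℝ) ≤ s - c)]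
          have := min_le_left δ (b - c)
          linarith
        have hsb : s ≤ b := by
          have := min_le_right δ (b - c)
          linarith
        have hest := Hd s hsA.1 hsδ
        rw [hσeq] at hest
        rw [abs_of_nonpos (by linarith [hsA.2.le] : c - s ≤ 0)] at hest
        have hest' : G s - G c ≤ f c * (s - c) + ε * (s - c) := by
          have := abs_le.1 hest
          nlinarith [this.1, this.2]
        have hmem := step s hsA.1 hsA.2 hsb hest'
        have : s ≤ c := le_csSup hSbdd hmem
        linarith [hsA.2]
    have := hcS.2
    rwa [hcb] at this
  -- conclude
  refine le_of_forall_pos_le_add ?_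
  intro η hη
  have hba : (0:ℝ) < b - a := by linarith
  have := key (η / (b - a)) (div_pos hη hba)
  have heq : η / (b - a) * (b - a) = η := div_mul_cancel₀ η (ne_of_gt hba)
  linarith [this, heq.le]
end

section
/- Existence of a solution to a fractional initial value problem on ℝ: let 0 < α < 1, J = [0, a] ⊂ ℝ, and f : J × ℝ → ℝ be continuous and bounded (|f(t,y)| ≤ M for all t, y). Then there exists a continuous function y : J → ℝ satisfying the integral equation y(t) = (1/Γ(α)) ∫_0^t (t-s)^(α-1) f(s, y(s)) ds for all t ∈ J (equivalently, D_0^α y = f(t,y) with I_0^{1-α} y(0) = 0). -/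
/-!
Tonelli's delayed approximations. For a step `h > 0` the delayed equation
`y t = I^α [f (·, y (· - h))] t` can be solved explicitly, since on `[k h, (k + 1) h]` its
right-hand side only involves `y` on `[0, k h]`. Every such solution is the Riemann–Liouville
integral of a function bounded by `M`, hence bounded by `M a ^ α / Γ(α + 1)` and `α`-Hölder with
constant `2 M / Γ(α + 1)`: the kernel `(t - s) ^ (α - 1)` is integrable and decreasing. By
Arzelà–Ascoli the solutions for `h = a / (n + 1)` have a subsequence converging uniformly on
`[0, a]`; the delayed arguments converge along with it, and dominated convergence passes to the
limit in the integral equation.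
-/

open MeasureTheory intervalIntegral Set Filter Topology

section Kernel

variable {α M : ℝ} {g : ℝ → ℝ}

theorem intervalIntegrable_sub_rpow (hα : 0 < α) (u a b : ℝ) :
    IntervalIntegrable (fun s => (u - s) ^ (α - 1)) volume a b := by
  simpa using (intervalIntegrable_rpow' (a := u - a) (b := u - b)
    (by linarith : (-1 : ℝ) < α - 1)).comp_sub_left u

theorem integral_sub_rpow (hα : 0 < α) (u a b : ℝ) :
    ∫ s in a..b, (u - s) ^ (α - 1) = ((u - a) ^ α - (u - b) ^ α) / α := by
  rw [integral_comp_sub_left (fun x => x ^ (α - 1)) u,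
    integral_rpow (Or.inl (by linarith)), sub_add_cancel]

theorem intervalIntegrable_sub_rpow_mul (hα : 0 < α) (hg : AEStronglyMeasurable g volume)
    (hgM : ∀ s, |g s| ≤ M) (u a b : ℝ) :
    IntervalIntegrable (fun s => (u - s) ^ (α - 1) * g s) volume a b :=
  have hk := intervalIntegrable_sub_rpow hα u a b
  ⟨hk.1.mul_bdd hg.restrict (ae_of_all _ hgM), hk.2.mul_bdd hg.restrict (ae_of_all _ hgM)⟩

theorem abs_integral_sub_rpow_mul_le (hα : 0 < α) (hgM : ∀ s, |g s| ≤ M) {u a b : ℝ}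
    (hab : a ≤ b) (hbu : b ≤ u) :
    |∫ s in a..b, (u - s) ^ (α - 1) * g s| ≤ M * (u - a) ^ α / α := by
  have hM : 0 ≤ M := (abs_nonneg _).trans (hgM 0)
  calc |∫ s in a..b, (u - s) ^ (α - 1) * g s| ≤ ∫ s in a..b, M * (u - s) ^ (α - 1) := by
        rw [← Real.norm_eq_abs]
        refine norm_integral_le_of_norm_le hab (ae_of_all _ fun s hs => ?_)
          ((intervalIntegrable_sub_rpow hα u a b).const_mul M)
        have hk : 0 ≤ (u - s) ^ (α - 1) := Real.rpow_nonneg (by linarith [hs.2]) _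
        rw [Real.norm_eq_abs, abs_mul, abs_of_nonneg hk, mul_comm]
        exact mul_le_mul_of_nonneg_right (hgM s) hk
    _ = M * ((u - a) ^ α - (u - b) ^ α) / α := by
        rw [intervalIntegral.integral_const_mul, integral_sub_rpow hα, mul_div_assoc]
    _ ≤ M * (u - a) ^ α / α := by
        gcongr
        exact sub_le_self _ (Real.rpow_nonneg (by linarith) _)

theorem abs_integral_sub_rpow_mul_sub_le (hα : 0 < α) (hα1 : α ≤ 1)
    (hg : AEStronglyMeasurable g volume) (hgM : ∀ s, |g s| ≤ M) {t t' : ℝ}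
    (ht' : 0 ≤ t') (htt' : t' ≤ t) :
    |(∫ s in (0 : ℝ)..t, (t - s) ^ (α - 1) * g s) - ∫ s in (0 : ℝ)..t', (t' - s) ^ (α - 1) * g s|
      ≤ 2 * M * (t - t') ^ α / α := by
  have hM : 0 ≤ M := (abs_nonneg _).trans (hgM 0)
  have hint := intervalIntegrable_sub_rpow_mul hα hg hgM
  have hk := intervalIntegrable_sub_rpow hα
  have hsplit : (∫ s in (0 : ℝ)..t, (t - s) ^ (α - 1) * g s)
        - ∫ s in (0 : ℝ)..t', (t' - s) ^ (α - 1) * g s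
      = (∫ s in (0 : ℝ)..t', ((t - s) ^ (α - 1) - (t' - s) ^ (α - 1)) * g s)
        + ∫ s in t'..t, (t - s) ^ (α - 1) * g s := by
    rw [← integral_add_adjacent_intervals (hint t 0 t') (hint t t' t)]
    simp only [sub_mul]
    rw [integral_sub (hint t 0 t') (hint t' 0 t')]
    ring
  have hhead : |∫ s in (0 : ℝ)..t', ((t - s) ^ (α - 1) - (t' - s) ^ (α - 1)) * g s|
      ≤ M * (t - t') ^ α / α := by
    calc _ ≤ ∫ s in (0 : ℝ)..t', M * ((t' - s) ^ (α - 1) - (t - s) ^ (α - 1)) := by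
          rw [← Real.norm_eq_abs]
          refine norm_integral_le_of_norm_le ht' ?_ (((hk t' 0 t').sub (hk t 0 t')).const_mul M)
          -- the kernel decreases on `(0, ∞)` but not at `s = t'`: `0 ^ (α - 1) = 0` for `α < 1`
          filter_upwards [Measure.ae_ne volume t'] with s hst' hs
          have hmono : (t - s) ^ (α - 1) ≤ (t' - s) ^ (α - 1) :=
            Real.rpow_le_rpow_of_nonpos (sub_pos.2 (lt_of_le_of_ne hs.2 hst')) (by linarith)
              (by linarith)
          rw [Real.norm_eq_abs, abs_mul, abs_of_nonpos (sub_nonpos.2 hmono), neg_sub, mul_comm]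
          exact mul_le_mul_of_nonneg_right (hgM s) (sub_nonneg.2 hmono)
      _ = M * (t' ^ α - t ^ α + (t - t') ^ α) / α := by
          rw [intervalIntegral.integral_const_mul, integral_sub (hk t' 0 t') (hk t 0 t'),
            integral_sub_rpow hα, integral_sub_rpow hα, sub_self, Real.zero_rpow hα.ne', sub_zero,
            sub_zero, sub_zero]
          ring
      _ ≤ M * (t - t') ^ α / α := by
          have : t' ^ α ≤ t ^ α := Real.rpow_le_rpow ht' htt' hα.le
          gcongr
          linarith
  calc _ = |(∫ s in (0 : ℝ)..t', ((t - s) ^ (α - 1) - (t' - s) ^ (α - 1)) * g s)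
        + ∫ s in t'..t, (t - s) ^ (α - 1) * g s| := by rw [hsplit]
    _ ≤ M * (t - t') ^ α / α + M * (t - t') ^ α / α :=
        (abs_add_le _ _).trans (add_le_add hhead (abs_integral_sub_rpow_mul_le hα hgM htt' le_rfl))
    _ = 2 * M * (t - t') ^ α / α := by ring

end Kernel

theorem equicontinuous_of_dist_le_rpow {ι X Y : Type*} [PseudoMetricSpace X]
    [PseudoMetricSpace Y] {K r : ℝ} (hr : 0 < r) (f : ι → X → Y)
    (hf : ∀ i x y, dist (f i x) (f i y) ≤ K * dist x y ^ r) : Equicontinuous f := by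
  refine Metric.equicontinuous_of_continuity_modulus (fun u => K * u ^ r) ?_ f
    fun x y i => hf i x y
  simpa [Real.zero_rpow hr.ne'] using
    (continuousAt_const.mul (Real.continuousAt_rpow_const 0 r (Or.inr hr.le))).tendsto (x := 0)
      (f := fun u : ℝ => K * u ^ r)

theorem exists_subseq_tendstoUniformlyOn_of_dist_le_rpow {X : Type*} [PseudoMetricSpace X]
    {s : Set X} (hs : IsCompact s) {C K r : ℝ} (hr : 0 < r) {Y : ℕ → X → ℝ}
    (hbdd : ∀ n, ∀ x ∈ s, |Y n x| ≤ C)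
    (hhol : ∀ n, ∀ x ∈ s, ∀ x' ∈ s, dist (Y n x) (Y n x') ≤ K * dist x x' ^ r) :
    ∃ y : X → ℝ, ContinuousOn y s ∧
      ∃ φ : ℕ → ℕ, StrictMono φ ∧ TendstoUniformlyOn (fun j => Y (φ j)) y atTop s := by
  have := isCompact_iff_compactSpace.mp hs
  have hequi : Equicontinuous fun n (x : s) => Y n x :=
    equicontinuous_of_dist_le_rpow hr _ fun n x x' => hhol n x x.2 x' x'.2
  let g : ℕ → BoundedContinuousFunction s ℝ := fun n => .mkOfCompact ⟨_, hequi.continuous n⟩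
  have hcpt : IsCompact (closure (range g)) := by
    refine BoundedContinuousFunction.arzela_ascoli (Icc (-C) C) isCompact_Icc _ ?_ ?_
    · rintro _ x ⟨n, rfl⟩
      exact abs_le.mp (hbdd n x x.2)
    · refine equicontinuous_of_dist_le_rpow (K := K) hr _ ?_
      rintro ⟨_, n, rfl⟩ x x'
      exact hhol n x x.2 x' x'.2
  obtain ⟨G, -, φ, hφ, hG⟩ := hcpt.tendsto_subseq fun n => subset_closure (mem_range_self n)
  classical
  let y : X → ℝ := fun x => if hx : x ∈ s then G ⟨x, hx⟩ else 0
  have hyG : y ∘ (↑) = (G : s → ℝ) := funext fun x => dif_pos x.2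
  refine ⟨y, ?_, φ, hφ, ?_⟩
  · rw [continuousOn_iff_continuous_domRestrict, domRestrict_eq, hyG]
    exact G.continuous
  · rw [tendstoUniformlyOn_iff_tendstoUniformly_comp_coe, hyG]
    exact BoundedContinuousFunction.tendsto_iff_tendstoUniformly.mp hG

/-- The Riemann–Liouville integral based at `0`, extended by `0` to `t ≤ 0`, where the delayed
arguments of Tonelli's approximations land. -/
noncomputable def rlIntegral (α : ℝ) (g : ℝ → ℝ) (t : ℝ) : ℝ :=
  (Real.Gamma α)⁻¹ * ∫ s in (0 : ℝ)..max t 0, (max t 0 - s) ^ (α - 1) * g s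

section RiemannLiouville

variable {α M : ℝ} {g : ℝ → ℝ}

theorem rlIntegral_of_nonpos (g : ℝ → ℝ) {t : ℝ} (ht : t ≤ 0) : rlIntegral α g t = 0 := by
  rw [rlIntegral, max_eq_right ht, integral_same, mul_zero]

theorem rlIntegral_of_nonneg (g : ℝ → ℝ) {t : ℝ} (ht : 0 ≤ t) :
    rlIntegral α g t = (Real.Gamma α)⁻¹ * ∫ s in (0 : ℝ)..t, (t - s) ^ (α - 1) * g s := by
  rw [rlIntegral, max_eq_left ht]

theorem rlIntegral_congr {g' : ℝ → ℝ} {b t : ℝ} (hg : EqOn g g' (Icc 0 b)) (ht : t ≤ b) :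
    rlIntegral α g t = rlIntegral α g' t := by
  rcases le_total t 0 with ht0 | ht0
  · rw [rlIntegral_of_nonpos g ht0, rlIntegral_of_nonpos g' ht0]
  rw [rlIntegral_of_nonneg g ht0, rlIntegral_of_nonneg g' ht0]
  congr 1
  refine integral_congr fun s hs => ?_
  rw [uIcc_of_le ht0] at hs
  simp only [hg ⟨hs.1, hs.2.trans ht⟩]

theorem abs_rlIntegral_le (hα : 0 < α) (hgM : ∀ s, |g s| ≤ M) (t : ℝ) :
    |rlIntegral α g t| ≤ (Real.Gamma α)⁻¹ * (M * max t 0 ^ α / α) := by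
  have hΓ : 0 < (Real.Gamma α)⁻¹ := inv_pos.2 (Real.Gamma_pos_of_pos hα)
  rw [rlIntegral, abs_mul, abs_of_pos hΓ]
  gcongr
  simpa using abs_integral_sub_rpow_mul_le hα hgM (le_max_right t 0) le_rfl

theorem dist_rlIntegral_le (hα : 0 < α) (hα1 : α ≤ 1) (hg : AEStronglyMeasurable g volume)
    (hgM : ∀ s, |g s| ≤ M) (t t' : ℝ) :
    dist (rlIntegral α g t) (rlIntegral α g t') ≤
      2 * M * (Real.Gamma α)⁻¹ / α * dist t t' ^ α := by
  wlog htt' : t' ≤ t generalizing t t'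
  · rw [dist_comm, dist_comm t]
    exact this t' t (le_of_not_ge htt')
  have hΓ : 0 < (Real.Gamma α)⁻¹ := inv_pos.2 (Real.Gamma_pos_of_pos hα)
  have hM : 0 ≤ M := (abs_nonneg _).trans (hgM 0)
  have hmax : max t 0 - max t' 0 ≤ dist t t' :=
    (le_abs_self _).trans ((abs_max_sub_max_le_abs t t' 0).trans_eq (Real.dist_eq t t').symm)
  have hint := abs_integral_sub_rpow_mul_sub_le hα hα1 hg hgM (le_max_right t' 0)
    (max_le_max_right 0 htt')
  calc dist (rlIntegral α g t) (rlIntegral α g t')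
      = (Real.Gamma α)⁻¹ * |(∫ s in (0 : ℝ)..max t 0, (max t 0 - s) ^ (α - 1) * g s)
          - ∫ s in (0 : ℝ)..max t' 0, (max t' 0 - s) ^ (α - 1) * g s| := by
        rw [Real.dist_eq, rlIntegral, rlIntegral, ← mul_sub, abs_mul, abs_of_pos hΓ]
    _ ≤ (Real.Gamma α)⁻¹ * (2 * M * (max t 0 - max t' 0) ^ α / α) := by gcongr
    _ ≤ (Real.Gamma α)⁻¹ * (2 * M * dist t t' ^ α / α) := by
        gcongr
        exact sub_nonneg.2 (max_le_max_right 0 htt')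
    _ = 2 * M * (Real.Gamma α)⁻¹ / α * dist t t' ^ α := by ring

theorem tendsto_rlIntegral {ι : Type*} {l : Filter ι} [l.IsCountablyGenerated] (hα : 0 < α)
    {G : ι → ℝ → ℝ} (hG : ∀ i, AEStronglyMeasurable (G i) volume) (hGM : ∀ i s, |G i s| ≤ M)
    {t : ℝ} (ht : 0 ≤ t) (hlim : ∀ s ∈ Ioc 0 t, Tendsto (fun i => G i s) l (𝓝 (g s))) :
    Tendsto (fun i => rlIntegral α (G i) t) l (𝓝 (rlIntegral α g t)) := by
  simp only [rlIntegral_of_nonneg _ ht]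
  refine Tendsto.const_mul _ (tendsto_integral_filter_of_dominated_convergence
    (fun s => M * |(t - s) ^ (α - 1)|) (Eventually.of_forall fun i => ?_)
    (Eventually.of_forall fun i => ae_of_all _ fun s _ => ?_)
    ((intervalIntegrable_sub_rpow hα t 0 t).abs.const_mul M)
    (ae_of_all _ fun s hs => ?_))
  · exact (((measurable_const.sub measurable_id).pow_const _).aestronglyMeasurable.mul
      (hG i)).restrict
  · rw [Real.norm_eq_abs, abs_mul, mul_comm]
    exact mul_le_mul_of_nonneg_right (hGM i s) (abs_nonneg _)
  · rw [uIoc_of_le ht] at hs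
    exact tendsto_const_nhds.mul (hlim s hs)

theorem continuous_rlIntegral (hα : 0 < α) (hα1 : α ≤ 1) (hg : AEStronglyMeasurable g volume)
    (hgM : ∀ s, |g s| ≤ M) : Continuous (rlIntegral α g) :=
  (equicontinuous_of_dist_le_rpow hα (fun _ : Unit => rlIntegral α g)
    fun _ => dist_rlIntegral_le hα hα1 hg hgM).continuous ()

end RiemannLiouville

noncomputable def tonelliApprox (α : ℝ) (F : ℝ → ℝ → ℝ) (h : ℝ) : ℕ → ℝ → ℝ
  | 0 => 0
  | k + 1 => rlIntegral α fun s => F s (tonelliApprox α F h k (s - h))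

section Tonelli

variable {α M h : ℝ} {F : ℝ → ℝ → ℝ}

theorem tonelliApprox_succ_of_le (k : ℕ) {t : ℝ} (ht : t ≤ k * h) :
    tonelliApprox α F h (k + 1) t = tonelliApprox α F h k t := by
  induction k generalizing t with
  | zero => exact rlIntegral_of_nonpos _ (by simpa using ht)
  | succ k ih =>
    refine rlIntegral_congr (fun s hs => ?_) ht
    push_cast at hs
    rw [ih (by linarith [hs.2])]

theorem tonelliApprox_succ_eq_rlIntegral {k : ℕ} {t : ℝ} (ht : t ≤ (k + 1) * h) :
    tonelliApprox α F h (k + 1) t =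
      rlIntegral α (fun s => F s (tonelliApprox α F h (k + 1) (s - h))) t :=
  rlIntegral_congr (fun s hs => by rw [tonelliApprox_succ_of_le k (by linarith [hs.2])]) ht

theorem continuous_tonelliApprox (hα : 0 < α) (hα1 : α ≤ 1)
    (hF : Continuous fun p : ℝ × ℝ => F p.1 p.2) (hFM : ∀ s y, |F s y| ≤ M) (k : ℕ) :
    Continuous (tonelliApprox α F h k) := by
  induction k with
  | zero => exact continuous_const
  | succ k ih =>
    exact continuous_rlIntegral hα hα1
      (hF.comp (continuous_id.prodMk (ih.comp (continuous_sub_right h)))).aestronglyMeasurable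
      fun s => hFM s _

end Tonelli

section Existence

variable {α M : ℝ} {F : ℝ → ℝ → ℝ}

theorem eq_rlIntegral_of_tendstoUniformlyOn {ι : Type*} {l : Filter ι} [l.NeBot]
    [l.IsCountablyGenerated]
    (hα : 0 < α) (hF : Continuous fun p : ℝ × ℝ => F p.1 p.2) (hFM : ∀ s y, |F s y| ≤ M)
    {a : ℝ} {Y : ι → ℝ → ℝ} {y : ℝ → ℝ} {h : ι → ℝ} (hY : ∀ i, Measurable (Y i))
    (hh0 : ∀ i, 0 ≤ h i) (hh : Tendsto h l (𝓝 0))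
    (hYeq : ∀ i, ∀ t ∈ Icc 0 a, Y i t = rlIntegral α (fun s => F s (Y i (s - h i))) t)
    (hconv : TendstoUniformlyOn Y y l (Icc 0 a)) (hy : ContinuousOn y (Icc 0 a)) :
    ∀ t ∈ Icc 0 a, y t = rlIntegral α (fun s => F s (y s)) t := by
  intro t ht
  refine tendsto_nhds_unique (hconv.tendsto_at ht) ?_
  refine (tendsto_rlIntegral hα (fun i => ?_) (fun i s => hFM s _) ht.1 fun s hs => ?_).congr
    fun i => (hYeq i t ht).symm
  · exact (hF.measurable.comp (measurable_id.prodMk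
      ((hY i).comp (measurable_sub_const _)))).aestronglyMeasurable
  have hs' : s ∈ Icc 0 a := ⟨hs.1.le, hs.2.trans ht.2⟩
  have hshift : Tendsto (fun i => s - h i) l (𝓝[Icc 0 a] s) := by
    refine tendsto_nhdsWithin_iff.2 ⟨by simpa using tendsto_const_nhds.sub hh, ?_⟩
    filter_upwards [hh.eventually (gt_mem_nhds hs.1)] with i hi
    exact ⟨by linarith, by linarith [hh0 i, hs'.2]⟩
  exact ((hF.comp (continuous_const.prodMk continuous_id)).tendsto (y s)).comp
    (hconv.tendsto_comp (hy s hs') hshift)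

theorem exists_eq_rlIntegral (hα : 0 < α) (hα1 : α ≤ 1)
    (hF : Continuous fun p : ℝ × ℝ => F p.1 p.2) (hFM : ∀ s y, |F s y| ≤ M) {a : ℝ}
    (ha : 0 ≤ a) :
    ∃ y : ℝ → ℝ, ContinuousOn y (Icc 0 a) ∧
      ∀ t ∈ Icc 0 a, y t = rlIntegral α (fun s => F s (y s)) t := by
  set h : ℕ → ℝ := fun n => a / (n + 1)
  set Y : ℕ → ℝ → ℝ := fun n => tonelliApprox α F (h n) (n + 1)
  have hZ (n : ℕ) := continuous_tonelliApprox (h := h n) hα hα1 hF hFM n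
  have hG (n : ℕ) : AEStronglyMeasurable
      (fun s => F s (tonelliApprox α F (h n) n (s - h n))) volume :=
    (hF.comp (continuous_id.prodMk ((hZ n).comp (continuous_sub_right _)))).aestronglyMeasurable
  have hYeq : ∀ n, ∀ t ∈ Icc 0 a, Y n t = rlIntegral α (fun s => F s (Y n (s - h n))) t :=
    fun n t ht => tonelliApprox_succ_eq_rlIntegral
      (ht.2.trans_eq (mul_div_cancel₀ a n.cast_add_one_ne_zero).symm)
  have hYbdd : ∀ n, ∀ t ∈ Icc 0 a, |Y n t| ≤ (Real.Gamma α)⁻¹ * (M * a ^ α / α) := by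
    intro n t ht
    refine (abs_rlIntegral_le hα (fun s => hFM s _) t).trans ?_
    have hM : 0 ≤ M := (abs_nonneg _).trans (hFM 0 0)
    gcongr
    exact max_le ht.2 ha
  have hYhol : ∀ n, ∀ t ∈ Icc 0 a, ∀ t' ∈ Icc 0 a,
      dist (Y n t) (Y n t') ≤ 2 * M * (Real.Gamma α)⁻¹ / α * dist t t' ^ α :=
    fun n t _ t' _ => dist_rlIntegral_le hα hα1 (hG n) (fun s => hFM s _) t t'
  obtain ⟨y, hy, φ, hφ, hconv⟩ :=
    exists_subseq_tendstoUniformlyOn_of_dist_le_rpow isCompact_Icc hα hYbdd hYhol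
  refine ⟨y, hy, eq_rlIntegral_of_tendstoUniformlyOn hα hF hFM
    (fun _ => (continuous_tonelliApprox hα hα1 hF hFM _).measurable) (fun _ => by positivity) ?_
    (fun j => hYeq (φ j)) hconv hy⟩
  exact (tendsto_const_div_atTop_nhds_zero_nat a).comp
    ((tendsto_add_atTop_nat 1).comp hφ.tendsto_atTop) |>.congr fun j => by simp [h]

end Existence

theorem fractional_IVP_has_solution
    (α a M : ℝ) (hα : 0 < α) (hα1 : α < 1) (ha : 0 < a)
    (f : ℝ → ℝ → ℝ)
    (hf : ContinuousOn (fun p : ℝ × ℝ => f p.1 p.2)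
      (Set.Icc 0 a ×ˢ (Set.univ : Set ℝ)))
    (hM : ∀ t ∈ Set.Icc (0:ℝ) a, ∀ y : ℝ, |f t y| ≤ M) :
    ∃ y : ℝ → ℝ, ContinuousOn y (Set.Icc 0 a) ∧
      ∀ t ∈ Set.Icc (0:ℝ) a,
        y t = (1 / Real.Gamma α) * ∫ s in (0:ℝ)..t, (t - s) ^ (α - 1) * f s (y s) := by
  let F : ℝ → ℝ → ℝ := fun s y => f (projIcc 0 a ha.le s) y
  have hF : Continuous fun p : ℝ × ℝ => F p.1 p.2 :=
    hf.comp_continuous ((continuous_subtype_val.comp (continuous_projIcc (h := ha.le))).comp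
      continuous_fst |>.prodMk continuous_snd) fun _ => ⟨Subtype.prop _, mem_univ _⟩
  have hFf : ∀ s ∈ Icc 0 a, F s = f s := fun s hs => by simp [F, projIcc_of_mem _ hs]
  obtain ⟨y, hy, hyeq⟩ :=
    exists_eq_rlIntegral hα hα1.le hF (fun _ _ => hM _ (Subtype.prop _) _) ha.le
  refine ⟨y, hy, fun t ht => ?_⟩
  rw [hyeq t ht, rlIntegral_of_nonneg _ ht.1, one_div]
  congr 1
  refine integral_congr fun s hs => ?_
  rw [uIcc_of_le ht.1] at hs
  simp only [hFf s ⟨hs.1, hs.2.trans ht.2⟩]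
end
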